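/- arXiv:2006.09709 — 4 statements merged into one kernel-verified Lean document; each statement's English description precedes it below -/
import Mathlib

section
/- Let n ≥ 1 and let S be a finite set with at least two elements. Let T ⊆ C_S(ℝⁿ) be the set of injective x : S → ℝⁿ with Σ_{s∈S} x(s) = 0 and Σ_{s∈S} ‖x(s)‖² = 1. Equip C_S(ℝⁿ) with the equivalence relation x ∼ y iff there exist a real λ > 0 and b ∈ ℝⁿ with y(s) = λ·x(s) + b for all s ∈ S (the orbit relation of the diagonal Dil_n-action), and give the quotient C_S(ℝⁿ)/Dil_n the quotient topology. Then the composite T ↪ C_S(ℝⁿ) → C_S(ℝⁿ)/Dil_n is a homeomorphism; in particular every Dil_n-orbit in C_S(ℝⁿ) meets T in exactly one point. -/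
/-!
Translating a configuration moves its centroid by the same vector, and dilating it by `λ > 0`
multiplies its centroid by `λ` and its moment of inertia about the centroid by `λ²`. Hence
`x ↦ (x - centroid x) / √(inertia x)` is a continuous retraction of `C_S(ℝⁿ)` onto `T` that is
constant on `Dil_n`-orbits and sends each configuration into its own orbit; it descends to a
continuous inverse of `T → C_S(ℝⁿ)/Dil_n`. Injectivity and `|S| ≥ 2` make the inertia positive.
-/

/-- The configuration space `C_S(ℝⁿ)` of ordered pairwise distinct points of
`ℝⁿ` labeled by `S`, i.e. injective maps `S → ℝⁿ`, with the subspace topology. -/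
def ConfigSpace (n : ℕ) (S : Type*) : Type _ :=
  {x : S → EuclideanSpace ℝ (Fin n) // Function.Injective x}

noncomputable instance (n : ℕ) (S : Type*) : TopologicalSpace (ConfigSpace n S) :=
  instTopologicalSpaceSubtype

/-- The orbit equivalence relation of the diagonal `Dil_n`-action on `C_S(ℝⁿ)`:
`x ∼ y` iff `y = λ • x + b` pointwise for some `λ > 0` and `b ∈ ℝⁿ`. -/
def dilOrbitRel (n : ℕ) (S : Type*) (x y : ConfigSpace n S) : Prop :=
  ∃ lam : ℝ, 0 < lam ∧ ∃ b : EuclideanSpace ℝ (Fin n),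
    ∀ s : S, y.1 s = lam • x.1 s + b

/-- The set `T` of normalized configurations: barycenter at the origin and
sum of squared norms equal to `1`. -/
def normalizedConfigs (n : ℕ) (S : Type*) [Fintype S] : Set (ConfigSpace n S) :=
  {x | (∑ s : S, x.1 s) = 0 ∧ (∑ s : S, ‖x.1 s‖ ^ 2) = (1 : ℝ)}

theorem isHomeomorph_quotMk_of_retraction {X : Type*} [TopologicalSpace X] {rel : X → X → Prop}
    {T : Set X} (r : X → T) (hr : Continuous r) (rel_self_r : ∀ x, rel x (r x))
    (r_eq_of_rel : ∀ x y, rel x y → r x = r y) (r_coe : ∀ t : T, r t = t) :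
    IsHomeomorph (fun t : T => Quot.mk rel t.1) := by
  rw [isHomeomorph_iff_exists_inverse]
  refine ⟨continuous_quot_mk.comp continuous_subtype_val, Quot.lift r r_eq_of_rel, r_coe,
    fun c => ?_, continuous_quot_lift r_eq_of_rel hr⟩
  induction c using Quot.ind with
  | _ x => exact (Quot.sound (rel_self_r x)).symm

theorem existsUnique_rel_of_retraction {X : Type*} {rel : X → X → Prop} {T : Set X}
    (r : X → T) (rel_self_r : ∀ x, rel x (r x)) (r_eq_of_rel : ∀ x y, rel x y → r x = r y)
    (r_coe : ∀ t : T, r t = t) (x : X) : ∃! t : T, rel x t :=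
  ⟨r x, rel_self_r x, fun t ht => by rw [← r_coe t, r_eq_of_rel x t ht]⟩

namespace Configuration

variable {S E : Type*} [Fintype S] [NormedAddCommGroup E] [NormedSpace ℝ E]

noncomputable def centroid (x : S → E) : E :=
  (Fintype.card S : ℝ)⁻¹ • ∑ s, x s

noncomputable def inertia (x : S → E) : ℝ :=
  ∑ s, ‖x s - centroid x‖ ^ 2

noncomputable def normalize (x : S → E) : S → E :=
  fun s => (√(inertia x))⁻¹ • (x s - centroid x)

section Nonempty

variable [Nonempty S]

theorem sum_sub_centroid (x : S → E) : ∑ s, (x s - centroid x) = 0 := by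
  rw [Finset.sum_sub_distrib, Finset.sum_const, Finset.card_univ, sub_eq_zero,
    ← Nat.cast_smul_eq_nsmul ℝ, centroid, smul_inv_smul₀ (by positivity)]

theorem centroid_smul_add (x : S → E) (lam : ℝ) (b : E) :
    centroid (fun s => lam • x s + b) = lam • centroid x + b := by
  simp only [centroid, Finset.sum_add_distrib, ← Finset.smul_sum, Finset.sum_const,
    Finset.card_univ, smul_add, ← Nat.cast_smul_eq_nsmul ℝ, inv_smul_smul₀
    (show (Fintype.card S : ℝ) ≠ 0 by positivity), smul_comm _ lam]

theorem inertia_smul_add (x : S → E) (lam : ℝ) (b : E) :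
    inertia (fun s => lam • x s + b) = lam ^ 2 * inertia x := by
  simp only [inertia, centroid_smul_add, add_sub_add_right_eq_sub, ← smul_sub, norm_smul,
    mul_pow, Real.norm_eq_abs, sq_abs, Finset.mul_sum]

theorem normalize_smul_add (x : S → E) {lam : ℝ} (hlam : 0 < lam) (b : E) :
    normalize (fun s => lam • x s + b) = normalize x := by
  funext s
  rw [normalize, normalize, inertia_smul_add, centroid_smul_add, add_sub_add_right_eq_sub,
    ← smul_sub, smul_smul, Real.sqrt_mul (sq_nonneg lam), Real.sqrt_sq hlam.le]
  congr 1
  field_simp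

theorem sum_normalize (x : S → E) : ∑ s, normalize x s = 0 := by
  simp only [normalize, ← Finset.smul_sum, sum_sub_centroid, smul_zero]

end Nonempty

theorem sum_norm_normalize_sq {x : S → E} (hx : 0 < inertia x) :
    ∑ s, ‖normalize x s‖ ^ 2 = 1 := by
  simp only [normalize, norm_smul, mul_pow, Real.norm_eq_abs, sq_abs, ← Finset.mul_sum]
  rw [inv_pow, Real.sq_sqrt hx.le]
  exact inv_mul_cancel₀ hx.ne'

theorem normalize_of_sum_eq_zero {x : S → E} (h0 : ∑ s, x s = 0)
    (h1 : ∑ s, ‖x s‖ ^ 2 = 1) : normalize x = x := by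
  have hc : centroid x = 0 := by rw [centroid, h0, smul_zero]
  funext s
  simp only [normalize, inertia, hc, sub_zero, h1, Real.sqrt_one, inv_one, one_smul]

theorem inertia_pos [Nontrivial S] {x : S → E} (hx : Function.Injective x) : 0 < inertia x := by
  obtain ⟨a, b, hab⟩ := exists_pair_ne S
  refine Finset.sum_pos' (fun s _ => by positivity) ?_
  obtain h | h : x a - centroid x ≠ 0 ∨ x b - centroid x ≠ 0 := by
    by_contra! h
    exact hab (hx (sub_eq_zero.mp h.1 ▸ (sub_eq_zero.mp h.2).symm))
  · exact ⟨a, Finset.mem_univ a, by positivity⟩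
  · exact ⟨b, Finset.mem_univ b, by positivity⟩

theorem normalize_injective {x : S → E} (hx : Function.Injective x) (hi : 0 < inertia x) :
    Function.Injective (normalize x) :=
  fun _ _ h => hx (sub_left_injective (smul_right_injective E (by positivity) h))

theorem continuousOn_normalize :
    ContinuousOn (normalize : (S → E) → S → E) {x | 0 < inertia x} := by
  have hc : Continuous (centroid : (S → E) → E) :=
    (continuous_finsetSum _ fun s _ => continuous_apply s).const_smul _
  have hd : ∀ s, Continuous fun x : S → E => x s - centroid x :=
    fun s => (continuous_apply s).sub hc
  have hi : Continuous (inertia : (S → E) → ℝ) :=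
    continuous_finsetSum _ fun s _ => (hd s).norm.pow 2
  refine continuousOn_pi.mpr fun s => ContinuousOn.smul ?_ (hd s).continuousOn
  exact (hi.sqrt.continuousOn).inv₀ fun x hx => (Real.sqrt_pos.mpr hx).ne'

end Configuration

namespace ConfigSpace

open Configuration

variable {n : ℕ} {S : Type} [Fintype S] [Nontrivial S]

noncomputable def toNormalized (x : ConfigSpace n S) : normalizedConfigs n S :=
  ⟨⟨normalize x.1, normalize_injective x.2 (inertia_pos x.2)⟩,
    sum_normalize x.1, sum_norm_normalize_sq (inertia_pos x.2)⟩

theorem dilOrbitRel_toNormalized (x : ConfigSpace n S) :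
    dilOrbitRel n S x (toNormalized x).1 :=
  ⟨(√(inertia x.1))⁻¹, inv_pos.mpr (Real.sqrt_pos.mpr (inertia_pos x.2)),
    -((√(inertia x.1))⁻¹ • centroid x.1), fun _ => by
      rw [← sub_eq_add_neg, ← smul_sub]; rfl⟩

theorem toNormalized_eq_of_dilOrbitRel {x y : ConfigSpace n S} (h : dilOrbitRel n S x y) :
    toNormalized x = toNormalized y := by
  obtain ⟨lam, hlam, b, hb⟩ := h
  have hy : y.1 = fun s => lam • x.1 s + b := funext hb
  apply Subtype.ext; apply Subtype.ext
  simp only [toNormalized, hy, normalize_smul_add _ hlam]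

theorem toNormalized_coe (t : normalizedConfigs n S) : toNormalized t.1 = t := by
  apply Subtype.ext; apply Subtype.ext
  exact normalize_of_sum_eq_zero t.2.1 t.2.2

theorem continuous_toNormalized : Continuous (toNormalized : ConfigSpace n S → _) := by
  have h := continuousOn_normalize.comp_continuous continuous_subtype_val
    fun x : ConfigSpace n S => inertia_pos x.2
  exact (h.subtype_mk _).subtype_mk _

end ConfigSpace

open ConfigSpace in
theorem normalizedConfigs_homeomorph_quotient_general
    (n : ℕ) (S : Type) [Fintype S] (hS : 2 ≤ Fintype.card S) :
    IsHomeomorph (fun t : normalizedConfigs n S => Quot.mk (dilOrbitRel n S) t.1) ∧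
    (∀ x : ConfigSpace n S, ∃! t : normalizedConfigs n S, dilOrbitRel n S x t.1) := by
  have : Nontrivial S := Fintype.one_lt_card_iff_nontrivial.mp hS
  exact ⟨isHomeomorph_quotMk_of_retraction toNormalized continuous_toNormalized
      dilOrbitRel_toNormalized (fun _ _ => toNormalized_eq_of_dilOrbitRel) toNormalized_coe,
    existsUnique_rel_of_retraction toNormalized dilOrbitRel_toNormalized
      (fun _ _ => toNormalized_eq_of_dilOrbitRel) toNormalized_coe⟩

/-- the composite `T ↪ C_S(ℝⁿ) → C_S(ℝⁿ)/Dil_n` is a homeomorphism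
onto the quotient (with the quotient topology); in particular every `Dil_n`-orbit
meets `T` in exactly one point. -/
theorem normalizedConfigs_homeomorph_quotient
    (n : ℕ) (hn : 1 ≤ n) (S : Type) [Fintype S] (hS : 2 ≤ Fintype.card S) :
    IsHomeomorph (fun t : normalizedConfigs n S => Quot.mk (dilOrbitRel n S) t.1) ∧
    (∀ x : ConfigSpace n S, ∃! t : normalizedConfigs n S, dilOrbitRel n S x t.1) :=
  normalizedConfigs_homeomorph_quotient_general n S hS
end

section
/- Let n ≥ 1. On the configuration space C₂(ℝⁿ) = {(x, y) ∈ ℝⁿ × ℝⁿ : x ≠ y} of two distinct ordered points, the map (x, y) ↦ (y − x)/‖y − x‖ with values in the unit sphere S^{n−1} ⊂ ℝⁿ is invariant under the diagonal Dil_n-action, and the induced map on the quotient is a homeomorphism C₂(ℝⁿ)/Dil_n ≅ S^{n−1} (where the quotient by the orbit equivalence relation (x, y) ∼ (λ·x + b, λ·y + b), λ > 0, b ∈ ℝⁿ, carries the quotient topology). -/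
/-- The configuration space `C₂(ℝⁿ)` of two distinct ordered points of `ℝⁿ`. -/
def Config2 (n : ℕ) : Type _ :=
  {p : EuclideanSpace ℝ (Fin n) × EuclideanSpace ℝ (Fin n) // p.1 ≠ p.2}

noncomputable instance (n : ℕ) : TopologicalSpace (Config2 n) :=
  instTopologicalSpaceSubtype

/-- The Gauss map `(x, y) ↦ (y − x)/‖y − x‖`. -/
noncomputable def gaussMap (n : ℕ) (p : Config2 n) : EuclideanSpace ℝ (Fin n) :=
  ‖p.1.2 - p.1.1‖⁻¹ • (p.1.2 - p.1.1)

/-- The orbit equivalence relation of the diagonal `Dil_n`-action on `C₂(ℝⁿ)`. -/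
def dilOrbitRel2 (n : ℕ) (p q : Config2 n) : Prop :=
  ∃ lam : ℝ, 0 < lam ∧ ∃ b : EuclideanSpace ℝ (Fin n),
    q.1.1 = lam • p.1.1 + b ∧ q.1.2 = lam • p.1.2 + b

lemma config2_sub_ne (n : ℕ) (p : Config2 n) : p.1.2 - p.1.1 ≠ 0 :=
  sub_ne_zero.mpr (Ne.symm p.2)

lemma gaussMap_mem_sphere (n : ℕ) (p : Config2 n) :
    gaussMap n p ∈ Metric.sphere (0 : EuclideanSpace ℝ (Fin n)) 1 := by
  have h := config2_sub_ne n p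
  have hne : ‖p.1.2 - p.1.1‖ ≠ 0 := norm_ne_zero_iff.mpr h
  simp only [Metric.mem_sphere, dist_zero_right, gaussMap, norm_smul, norm_inv,
    norm_norm]
  exact inv_mul_cancel₀ hne

lemma gaussMap_invariant (n : ℕ) (p q : Config2 n) (h : dilOrbitRel2 n p q) :
    gaussMap n p = gaussMap n q := by
  obtain ⟨lam, hlam, b, h1, h2⟩ := h
  have hd : q.1.2 - q.1.1 = lam • (p.1.2 - p.1.1) := by
    rw [h1, h2, smul_sub]; abel
  have hne : ‖p.1.2 - p.1.1‖ ≠ 0 := norm_ne_zero_iff.mpr (config2_sub_ne n p)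
  unfold gaussMap
  rw [hd, norm_smul, Real.norm_eq_abs, abs_of_pos hlam, smul_smul]
  congr 1
  field_simp

/-- The Gauss map as a map into the sphere. -/
noncomputable def gaussMapS (n : ℕ) (p : Config2 n) :
    Metric.sphere (0 : EuclideanSpace ℝ (Fin n)) 1 :=
  ⟨gaussMap n p, gaussMap_mem_sphere n p⟩

lemma continuous_gaussMapS (n : ℕ) : Continuous (gaussMapS n) := by
  apply Continuous.subtype_mk
  have hsub : Continuous fun p : Config2 n => p.1.2 - p.1.1 :=
    (continuous_snd.comp continuous_subtype_val).sub
      (continuous_fst.comp continuous_subtype_val)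
  exact (hsub.norm.inv₀ fun p => norm_ne_zero_iff.mpr (config2_sub_ne n p)).smul hsub

/-- Section of the quotient: a point `v` of the sphere gives the configuration `(0, v)`. -/
noncomputable def sphereSection (n : ℕ)
    (v : Metric.sphere (0 : EuclideanSpace ℝ (Fin n)) 1) : Config2 n :=
  ⟨(0, v.1), by
    intro h
    have hv : ‖(v : EuclideanSpace ℝ (Fin n))‖ = 1 := by
      simpa using v.2
    have h0 : (v : EuclideanSpace ℝ (Fin n)) = 0 := by simpa using h.symm
    rw [h0] at hv
    simp at hv⟩

/-- the Gauss map takes values in the unit sphere `S^{n-1} ⊂ ℝⁿ`, it is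
invariant under the diagonal `Dil_n`-action, and it induces a homeomorphism
`C₂(ℝⁿ)/Dil_n ≅ S^{n−1}` on the quotient by the orbit equivalence relation. -/
theorem config2_quotient_homeomorph_sphere (n : ℕ) (hn : 1 ≤ n) :
    (∀ p : Config2 n, gaussMap n p ∈ Metric.sphere (0 : EuclideanSpace ℝ (Fin n)) 1) ∧
    (∀ p q : Config2 n, dilOrbitRel2 n p q → gaussMap n p = gaussMap n q) ∧
    ∃ f : Quot (dilOrbitRel2 n) ≃ₜ Metric.sphere (0 : EuclideanSpace ℝ (Fin n)) 1,
      ∀ p : Config2 n, (f (Quot.mk (dilOrbitRel2 n) p) : EuclideanSpace ℝ (Fin n)) = gaussMap n p := by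
  refine ⟨gaussMap_mem_sphere n, gaussMap_invariant n, ?_⟩
  have hlift : ∀ p q : Config2 n, dilOrbitRel2 n p q → gaussMapS n p = gaussMapS n q :=
    fun p q h => Subtype.ext (gaussMap_invariant n p q h)
  have hleft : ∀ x : Quot (dilOrbitRel2 n),
      Quot.mk (dilOrbitRel2 n) (sphereSection n (Quot.lift (gaussMapS n) hlift x)) = x := by
    refine fun x => Quot.inductionOn x fun p => ?_
    apply Quot.sound
    refine ⟨‖p.1.2 - p.1.1‖, norm_pos_iff.mpr (config2_sub_ne n p), p.1.1,
      by simp [sphereSection], ?_⟩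
    show p.1.2 = ‖p.1.2 - p.1.1‖ • gaussMap n p + p.1.1
    rw [gaussMap, smul_smul,
      mul_inv_cancel₀ (norm_ne_zero_iff.mpr (config2_sub_ne n p)), one_smul]
    abel
  have hright : ∀ v : Metric.sphere (0 : EuclideanSpace ℝ (Fin n)) 1,
      Quot.lift (gaussMapS n) hlift (Quot.mk (dilOrbitRel2 n) (sphereSection n v)) = v := by
    intro v
    apply Subtype.ext
    show gaussMap n (sphereSection n v) = v
    have hv : ‖(v : EuclideanSpace ℝ (Fin n))‖ = 1 := by simpa using v.2
    show ‖(v : EuclideanSpace ℝ (Fin n)) - 0‖⁻¹ • ((v : EuclideanSpace ℝ (Fin n)) - 0) = v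
    simp [hv]
  have hsec : Continuous (sphereSection n) :=
    Continuous.subtype_mk (continuous_const.prodMk continuous_subtype_val) _
  exact ⟨{
    toFun := Quot.lift (gaussMapS n) hlift
    invFun := fun v => Quot.mk _ (sphereSection n v)
    left_inv := hleft
    right_inv := hright
    continuous_toFun := continuous_quot_lift hlift (continuous_gaussMapS n)
    continuous_invFun := continuous_quot_mk.comp hsec }, fun p => by simp [Homeomorph.homeomorph_mk_coe]; rfl⟩
end

section
/- Let n ≥ 1. Consider the space of pairs (t, s) where t lies in the boundary hyperplane {x ∈ ℝⁿ : x_0 = 0} and s lies in the open half-space ℝⁿ_{>0}, with Dil_{n−1} acting diagonally. The map (t, s) ↦ (s − t)/‖s − t‖ takes values in the open upper hemisphere U = {v ∈ S^{n−1} : v_0 > 0} of the unit sphere of ℝⁿ, is invariant under the diagonal Dil_{n−1}-action, and induces a homeomorphism from the quotient of this space by the orbit equivalence relation (with the quotient topology) onto U. -/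
/-- The space of pairs `(t, s)` with `t` in the boundary hyperplane `{x_0 = 0}`
and `s` in the open half-space `ℝⁿ_{>0}`. -/
def OpenClosedPairs (n : ℕ) (hn : 1 ≤ n) : Type _ :=
  {p : EuclideanSpace ℝ (Fin n) × EuclideanSpace ℝ (Fin n) //
    p.1 ⟨0, hn⟩ = 0 ∧ 0 < p.2 ⟨0, hn⟩}

noncomputable instance (n : ℕ) (hn : 1 ≤ n) : TopologicalSpace (OpenClosedPairs n hn) :=
  instTopologicalSpaceSubtype

/-- The map `(t, s) ↦ (s − t)/‖s − t‖`. -/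
noncomputable def ocGaussMap (n : ℕ) (hn : 1 ≤ n) (p : OpenClosedPairs n hn) :
    EuclideanSpace ℝ (Fin n) :=
  ‖p.1.2 - p.1.1‖⁻¹ • (p.1.2 - p.1.1)

/-- The orbit equivalence relation of the diagonal `Dil_{n−1}`-action. -/
def ocDilOrbitRel (n : ℕ) (hn : 1 ≤ n) (p q : OpenClosedPairs n hn) : Prop :=
  ∃ lam : ℝ, 0 < lam ∧ ∃ b : EuclideanSpace ℝ (Fin n), b ⟨0, hn⟩ = 0 ∧
    q.1.1 = lam • p.1.1 + b ∧ q.1.2 = lam • p.1.2 + b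

/-- The open upper hemisphere `U = {v ∈ S^{n−1} : v_0 > 0}`. -/
def upperHemisphere (n : ℕ) (hn : 1 ≤ n) : Set (EuclideanSpace ℝ (Fin n)) :=
  {v | ‖v‖ = 1 ∧ 0 < v ⟨0, hn⟩}

lemma ocDiff_zero_pos (n : ℕ) (hn : 1 ≤ n) (p : OpenClosedPairs n hn) :
    0 < (p.1.2 - p.1.1) ⟨0, hn⟩ := by
  have h := p.2
  simp [PiLp.sub_apply, h.1]
  exact h.2

lemma ocDiff_norm_pos (n : ℕ) (hn : 1 ≤ n) (p : OpenClosedPairs n hn) :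
    0 < ‖p.1.2 - p.1.1‖ := by
  rw [norm_pos_iff]
  intro h
  have := ocDiff_zero_pos n hn p
  rw [h] at this
  simp at this

lemma ocGauss_mem (n : ℕ) (hn : 1 ≤ n) (p : OpenClosedPairs n hn) :
    ocGaussMap n hn p ∈ upperHemisphere n hn := by
  have hpos := ocDiff_norm_pos n hn p
  constructor
  · rw [ocGaussMap, norm_smul, norm_inv, norm_norm]
    field_simp
  · rw [ocGaussMap]
    have : (‖p.1.2 - p.1.1‖⁻¹ • (p.1.2 - p.1.1)) ⟨0, hn⟩
        = ‖p.1.2 - p.1.1‖⁻¹ * (p.1.2 - p.1.1) ⟨0, hn⟩ := rfl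
    rw [this]
    exact mul_pos (inv_pos.mpr hpos) (ocDiff_zero_pos n hn p)

lemma ocGauss_invariant (n : ℕ) (hn : 1 ≤ n) (p q : OpenClosedPairs n hn)
    (h : ocDilOrbitRel n hn p q) : ocGaussMap n hn p = ocGaussMap n hn q := by
  obtain ⟨lam, hlam, b, _, h1, h2⟩ := h
  have hd : q.1.2 - q.1.1 = lam • (p.1.2 - p.1.1) := by
    rw [h1, h2]; module
  have hp := (ocDiff_norm_pos n hn p).ne'
  rw [ocGaussMap, ocGaussMap, hd, norm_smul, smul_smul, Real.norm_eq_abs,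
    abs_of_pos hlam]
  congr 1
  field_simp

/-- If the Gauss maps agree, the pairs are in the same orbit. -/
lemma ocGauss_inj (n : ℕ) (hn : 1 ≤ n) (p q : OpenClosedPairs n hn)
    (h : ocGaussMap n hn p = ocGaussMap n hn q) : ocDilOrbitRel n hn p q := by
  have hp := ocDiff_norm_pos n hn p
  have hq := ocDiff_norm_pos n hn q
  set d := p.1.2 - p.1.1 with hdp
  set d' := q.1.2 - q.1.1 with hdq
  have hd' : ∃ lam : ℝ, 0 < lam ∧ d' = lam • d := by
    refine ⟨‖d'‖ * ‖d‖⁻¹, mul_pos hq (inv_pos.mpr hp), ?_⟩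
    have := h
    rw [ocGaussMap, ocGaussMap] at this
    have h2 : ‖d'‖ • (‖d'‖⁻¹ • d') = ‖d'‖ • (‖d‖⁻¹ • d) := by rw [this]
    rw [smul_smul, smul_smul, mul_inv_cancel₀ hq.ne', one_smul] at h2
    exact h2
  obtain ⟨lam, hlam, hd'⟩ := hd'
  refine ⟨lam, hlam, q.1.1 - lam • p.1.1, ?_, ?_, ?_⟩
  · have : (q.1.1 - lam • p.1.1) ⟨0, hn⟩
        = q.1.1 ⟨0, hn⟩ - lam * p.1.1 ⟨0, hn⟩ := rfl
    rw [this, p.2.1, q.2.1]; ring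
  · module
  · have : q.1.2 = d' + q.1.1 := by rw [hdq]; abel
    rw [this, hd']
    module

lemma ocGauss_continuous (n : ℕ) (hn : 1 ≤ n) : Continuous (ocGaussMap n hn) := by
  unfold ocGaussMap
  have hsub : Continuous fun p : OpenClosedPairs n hn => p.1.2 - p.1.1 :=
    ((continuous_snd.comp continuous_subtype_val).sub
      (continuous_fst.comp continuous_subtype_val))
  exact ((hsub.norm.inv₀ fun p => (ocDiff_norm_pos n hn p).ne').smul hsub)

/-- The section `v ↦ (0, v)`. -/
def ocSection (n : ℕ) (hn : 1 ≤ n) (v : upperHemisphere n hn) : OpenClosedPairs n hn :=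
  ⟨(0, (v : EuclideanSpace ℝ (Fin n))), by simp, v.2.2⟩

lemma ocGauss_section (n : ℕ) (hn : 1 ≤ n) (v : upperHemisphere n hn) :
    ocGaussMap n hn (ocSection n hn v) = (v : EuclideanSpace ℝ (Fin n)) := by
  rw [ocGaussMap]
  show ‖(v : EuclideanSpace ℝ (Fin n)) - 0‖⁻¹ • ((v : EuclideanSpace ℝ (Fin n)) - 0) = _
  rw [sub_zero, v.2.1]
  simp

noncomputable def ocPhi (n : ℕ) (hn : 1 ≤ n) :
    Quot (ocDilOrbitRel n hn) → upperHemisphere n hn :=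
  Quot.lift (fun p => ⟨ocGaussMap n hn p, ocGauss_mem n hn p⟩)
    (fun p q h => Subtype.ext (ocGauss_invariant n hn p q h))

noncomputable def ocPsi (n : ℕ) (hn : 1 ≤ n) :
    upperHemisphere n hn → Quot (ocDilOrbitRel n hn) :=
  fun v => Quot.mk _ (ocSection n hn v)

lemma ocPhi_mk (n : ℕ) (hn : 1 ≤ n) (p : OpenClosedPairs n hn) :
    (ocPhi n hn (Quot.mk _ p) : EuclideanSpace ℝ (Fin n)) = ocGaussMap n hn p := rfl

lemma oc_right_inv (n : ℕ) (hn : 1 ≤ n) : ∀ v, ocPhi n hn (ocPsi n hn v) = v := by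
  intro v
  apply Subtype.ext
  rw [ocPsi, ocPhi_mk, ocGauss_section]

lemma oc_left_inv (n : ℕ) (hn : 1 ≤ n) : ∀ x, ocPsi n hn (ocPhi n hn x) = x := by
  apply Quot.ind
  intro p
  apply Quot.sound
  apply ocGauss_inj
  rw [ocGauss_section]
  exact ocPhi_mk n hn p

lemma ocPhi_continuous (n : ℕ) (hn : 1 ≤ n) : Continuous (ocPhi n hn) :=
  continuous_quot_lift _ ((ocGauss_continuous n hn).subtype_mk _)

lemma ocPsi_continuous (n : ℕ) (hn : 1 ≤ n) : Continuous (ocPsi n hn) :=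
  continuous_quot_mk.comp
    ((continuous_const.prodMk continuous_subtype_val).subtype_mk _)

/-- the map `(t, s) ↦ (s − t)/‖s − t‖` takes values in the open upper
hemisphere, is invariant under the diagonal `Dil_{n−1}`-action, and induces a
homeomorphism from the quotient by the orbit equivalence relation onto `U`. -/
theorem openClosedPairs_quotient_homeomorph_upperHemisphere (n : ℕ) (hn : 1 ≤ n) :
    (∀ p : OpenClosedPairs n hn, ocGaussMap n hn p ∈ upperHemisphere n hn) ∧
    (∀ p q : OpenClosedPairs n hn, ocDilOrbitRel n hn p q →
      ocGaussMap n hn p = ocGaussMap n hn q) ∧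
    ∃ f : Quot (ocDilOrbitRel n hn) ≃ₜ upperHemisphere n hn,
      ∀ p : OpenClosedPairs n hn,
        (f (Quot.mk (ocDilOrbitRel n hn) p) : EuclideanSpace ℝ (Fin n)) = ocGaussMap n hn p :=
  ⟨ocGauss_mem n hn, ocGauss_invariant n hn,
    ⟨⟨⟨ocPhi n hn, ocPsi n hn, oc_left_inv n hn, oc_right_inv n hn⟩,
      ocPhi_continuous n hn, ocPsi_continuous n hn⟩,
      fun p => ocPhi_mk n hn p⟩⟩
end

section
/- Let n ≥ 2. On the space of ordered pairs (x, y) of distinct points both lying in the boundary hyperplane {x ∈ ℝⁿ : x_0 = 0}, the map (x, y) ↦ (y − x)/‖y − x‖ takes values in the equatorial (n−2)-sphere {v ∈ S^{n−1} : v_0 = 0}, is invariant under the diagonal Dil_{n−1}-action, and induces a homeomorphism from the quotient of this space by the orbit equivalence relation (with the quotient topology) onto {v ∈ S^{n−1} : v_0 = 0}, a sphere of dimension n−2. -/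
/-- The space of ordered pairs of distinct points both lying in the boundary
hyperplane `{x ∈ ℝⁿ : x_0 = 0}`. -/
def BoundaryPairs (n : ℕ) (hn : 1 ≤ n) : Type _ :=
  {p : EuclideanSpace ℝ (Fin n) × EuclideanSpace ℝ (Fin n) //
    p.1 ≠ p.2 ∧ p.1 ⟨0, hn⟩ = 0 ∧ p.2 ⟨0, hn⟩ = 0}

noncomputable instance (n : ℕ) (hn : 1 ≤ n) : TopologicalSpace (BoundaryPairs n hn) :=
  instTopologicalSpaceSubtype

/-- The map `(x, y) ↦ (y − x)/‖y − x‖`. -/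
noncomputable def bdGaussMap (n : ℕ) (hn : 1 ≤ n) (p : BoundaryPairs n hn) :
    EuclideanSpace ℝ (Fin n) :=
  ‖p.1.2 - p.1.1‖⁻¹ • (p.1.2 - p.1.1)

/-- The orbit equivalence relation of the diagonal `Dil_{n−1}`-action. -/
def bdDilOrbitRel (n : ℕ) (hn : 1 ≤ n) (p q : BoundaryPairs n hn) : Prop :=
  ∃ lam : ℝ, 0 < lam ∧ ∃ b : EuclideanSpace ℝ (Fin n), b ⟨0, hn⟩ = 0 ∧
    q.1.1 = lam • p.1.1 + b ∧ q.1.2 = lam • p.1.2 + b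

/-- The equatorial `(n−2)`-sphere `{v ∈ S^{n−1} : v_0 = 0}`. -/
def equatorialSphere (n : ℕ) (hn : 1 ≤ n) : Set (EuclideanSpace ℝ (Fin n)) :=
  {v | ‖v‖ = 1 ∧ v ⟨0, hn⟩ = 0}

lemma bdGaussMap_mem (n : ℕ) (hn : 1 ≤ n) (p : BoundaryPairs n hn) :
    bdGaussMap n hn p ∈ equatorialSphere n hn := by
  obtain ⟨⟨x, y⟩, hne, hx0, hy0⟩ := p
  have hd : y - x ≠ 0 := sub_ne_zero.mpr (Ne.symm hne)
  have hnorm : ‖y - x‖ ≠ 0 := norm_ne_zero_iff.mpr hd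
  constructor
  · simp only [bdGaussMap, norm_smul, norm_inv, norm_norm]
    field_simp
  · show (‖y - x‖⁻¹ • (y - x)) ⟨0, hn⟩ = 0
    have hx0' : x ⟨0, hn⟩ = 0 := hx0
    have hy0' : y ⟨0, hn⟩ = 0 := hy0
    have : (y - x) ⟨0, hn⟩ = 0 := by
      simp [PiLp.sub_apply, hx0', hy0']
    simp [PiLp.smul_apply, this]

lemma bdGaussMap_invariant (n : ℕ) (hn : 1 ≤ n) (p q : BoundaryPairs n hn)
    (h : bdDilOrbitRel n hn p q) : bdGaussMap n hn p = bdGaussMap n hn q := by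
  obtain ⟨lam, hlam, b, _, h1, h2⟩ := h
  have hdiff : q.1.2 - q.1.1 = lam • (p.1.2 - p.1.1) := by
    rw [h1, h2]; module
  have hd : p.1.2 - p.1.1 ≠ 0 := sub_ne_zero.mpr (Ne.symm p.2.1)
  have hnorm : ‖p.1.2 - p.1.1‖ ≠ 0 := norm_ne_zero_iff.mpr hd
  unfold bdGaussMap
  rw [hdiff, norm_smul, smul_smul, Real.norm_eq_abs, abs_of_pos hlam]
  congr 1
  field_simp

/-- for `n ≥ 2`, the map `(x, y) ↦ (y − x)/‖y − x‖` on pairs of distinct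
boundary points takes values in the equatorial `(n−2)`-sphere, is invariant under the
diagonal `Dil_{n−1}`-action, and induces a homeomorphism from the quotient by the
orbit equivalence relation onto the equatorial sphere. -/
theorem boundaryPairs_quotient_homeomorph_equatorialSphere (n : ℕ) (hn2 : 2 ≤ n) :
    ∀ hn : 1 ≤ n,
    (∀ p : BoundaryPairs n hn, bdGaussMap n hn p ∈ equatorialSphere n hn) ∧
    (∀ p q : BoundaryPairs n hn, bdDilOrbitRel n hn p q →
      bdGaussMap n hn p = bdGaussMap n hn q) ∧
    ∃ f : Quot (bdDilOrbitRel n hn) ≃ₜ equatorialSphere n hn,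
      ∀ p : BoundaryPairs n hn,
        (f (Quot.mk (bdDilOrbitRel n hn) p) : EuclideanSpace ℝ (Fin n)) = bdGaussMap n hn p := by
  intro hn
  refine ⟨bdGaussMap_mem n hn, bdGaussMap_invariant n hn, ?_⟩
  -- section: v ↦ (0, v)
  have hsec : ∀ v : equatorialSphere n hn,
      ((0 : EuclideanSpace ℝ (Fin n)), (v : EuclideanSpace ℝ (Fin n))).1 ≠
        ((0 : EuclideanSpace ℝ (Fin n)), (v : EuclideanSpace ℝ (Fin n))).2 ∧
      ((0 : EuclideanSpace ℝ (Fin n)), (v : EuclideanSpace ℝ (Fin n))).1 ⟨0, hn⟩ = 0 ∧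
      ((0 : EuclideanSpace ℝ (Fin n)), (v : EuclideanSpace ℝ (Fin n))).2 ⟨0, hn⟩ = 0 := by
    intro ⟨v, hv1, hv0⟩
    refine ⟨?_, rfl, hv0⟩
    intro h
    have hv : v = (0 : EuclideanSpace ℝ (Fin n)) := h.symm
    rw [hv, norm_zero] at hv1; norm_num at hv1
  let sec : equatorialSphere n hn → BoundaryPairs n hn :=
    fun v => ⟨((0 : EuclideanSpace ℝ (Fin n)), (v : EuclideanSpace ℝ (Fin n))), hsec v⟩
  -- p is related to sec (gauss p)
  have hrel : ∀ p : BoundaryPairs n hn,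
      bdDilOrbitRel n hn p (sec ⟨bdGaussMap n hn p, bdGaussMap_mem n hn p⟩) := by
    intro p
    have hd : p.1.2 - p.1.1 ≠ 0 := sub_ne_zero.mpr (Ne.symm p.2.1)
    have hnorm : (0:ℝ) < ‖p.1.2 - p.1.1‖ := norm_pos_iff.mpr hd
    refine ⟨‖p.1.2 - p.1.1‖⁻¹, inv_pos.mpr hnorm, -(‖p.1.2 - p.1.1‖⁻¹ • p.1.1), ?_, ?_, ?_⟩
    · have := p.2.2.1
      simp [PiLp.neg_apply, PiLp.smul_apply, this]
    · show (0 : EuclideanSpace ℝ (Fin n)) = _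
      module
    · show bdGaussMap n hn p = _
      unfold bdGaussMap
      module
  have hG0 : ∀ v : equatorialSphere n hn,
      bdGaussMap n hn (sec v) = (v : EuclideanSpace ℝ (Fin n)) := by
    intro ⟨v, hv1, hv0⟩
    show ‖v - 0‖⁻¹ • (v - 0) = v
    rw [sub_zero, hv1]; simp
  let toF : Quot (bdDilOrbitRel n hn) → equatorialSphere n hn :=
    Quot.lift (fun p => ⟨bdGaussMap n hn p, bdGaussMap_mem n hn p⟩)
      (fun p q h => Subtype.ext (bdGaussMap_invariant n hn p q h))
  let invF : equatorialSphere n hn → Quot (bdDilOrbitRel n hn) :=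
    fun v => Quot.mk _ (sec v)
  have hleft : Function.LeftInverse invF toF := by
    refine Quot.ind ?_
    intro p
    simp only [invF, toF]
    exact (Quot.sound (hrel p)).symm
  have hright : Function.RightInverse invF toF := by
    intro v
    show (⟨bdGaussMap n hn (sec v), bdGaussMap_mem n hn (sec v)⟩ : equatorialSphere n hn) = v
    exact Subtype.ext (hG0 v)
  have hcontG : Continuous fun p : BoundaryPairs n hn =>
      (⟨bdGaussMap n hn p, bdGaussMap_mem n hn p⟩ : equatorialSphere n hn) := by
    apply Continuous.subtype_mk
    have hsub : Continuous fun p : BoundaryPairs n hn => p.1.2 - p.1.1 :=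
      (continuous_subtype_val.snd).sub (continuous_subtype_val.fst)
    exact (hsub.norm.inv₀ (fun p =>
      norm_ne_zero_iff.mpr (sub_ne_zero.mpr (Ne.symm p.2.1)))).smul hsub
  have hcont_toF : Continuous toF :=
    continuous_quot_lift _ hcontG
  have hcont_invF : Continuous invF := by
    apply (continuous_quot_mk).comp
    apply Continuous.subtype_mk
    exact continuous_const.prodMk continuous_subtype_val
  refine ⟨⟨⟨toF, invF, hleft, hright⟩, hcont_toF, hcont_invF⟩, fun p => by
    show ((toF (Quot.mk (bdDilOrbitRel n hn) p) : equatorialSphere n hn) :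
      EuclideanSpace ℝ (Fin n)) = bdGaussMap n hn p
    simp only [toF]⟩
end
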